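/- Let C_V assign to each (q, v) ∈ ℝᵐ × ℝᵐ a linear subspace C_V(q, v) ⊆ ℝᵐ, let 𝒞_V assign to each (q, p) ∈ ℝᵐ × ℝᵐ a linear subspace 𝒞_V(q, p) ⊆ ℝᵐ, and let L : ℝᵐ × ℝᵐ → ℝ be twice continuously differentiable, with the compatibility condition 𝒞_V(q, (∂L/∂v)(q, v)) = C_V(q, v) for all (q, v). Let q : ℝ → ℝᵐ be C² and v, p : ℝ → ℝᵐ be C¹. Then the following are equivalent for all t: (A) q̇(t) ∈ 𝒞_V(q(t), p(t)), v(t) = q̇(t), p(t) = (∂L/∂v)(q(t), v(t)), and ⟨ṗ(t) − (∂L/∂q)(q(t), v(t)), w⟩ = 0 for all w ∈ 𝒞_V(q(t), p(t)); (B) v(t) = q̇(t), p(t) = (∂L/∂v)(q(t), q̇(t)), q̇(t) ∈ C_V(q(t), q̇(t)), and ⟨(d/dt)(∂L/∂v)(q(t), q̇(t)) − (∂L/∂q)(q(t), q̇(t)), w⟩ = 0 for all w ∈ C_V(q(t), q̇(t)). -/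
import Mathlib


open scoped RealInnerProductSpace

noncomputable section

/-- `ℝᵐ` with the Euclidean inner product. -/
abbrev E (m : ℕ) : Type := EuclideanSpace ℝ (Fin m)

/-- Gradient of `L` in its first argument `q`. -/
noncomputable def gQ {m : ℕ} (L : E m → E m → ℝ) (q v : E m) : E m :=
  gradient (fun x => L x v) q

/-- Gradient of `L` in its second argument `v`. -/
noncomputable def gV {m : ℕ} (L : E m → E m → ℝ) (q v : E m) : E m :=
  gradient (fun y => L q y) v

/-- equivalence of the implicit first-order system on the cotangent bundle
(A) with the implicit second-order Lagrange-d'Alembert equations (B), under the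
compatibility condition `𝒞_V(q, ∂L/∂v(q,v)) = C_V(q,v)`. -/
theorem statement7 {m : ℕ} (CV : E m → E m → Submodule ℝ (E m))
    (CVs : E m → E m → Submodule ℝ (E m))
    (L : E m → E m → ℝ) (hL : ContDiff ℝ 2 (Function.uncurry L))
    (hcompat : ∀ q v : E m, CVs q (gV L q v) = CV q v)
    (q : ℝ → E m) (hq : ContDiff ℝ 2 q)
    (v p : ℝ → E m) (hv : ContDiff ℝ 1 v) (hp : ContDiff ℝ 1 p) :
    (∀ t : ℝ, deriv q t ∈ CVs (q t) (p t) ∧ v t = deriv q t ∧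
       p t = gV L (q t) (v t) ∧
       ∀ w ∈ CVs (q t) (p t), ⟪deriv p t - gQ L (q t) (v t), w⟫ = 0) ↔
    (∀ t : ℝ, v t = deriv q t ∧ p t = gV L (q t) (deriv q t) ∧
       deriv q t ∈ CV (q t) (deriv q t) ∧
       ∀ w ∈ CV (q t) (deriv q t),
         ⟪deriv (fun s => gV L (q s) (deriv q s)) t - gQ L (q t) (deriv q t), w⟫ = 0) := by
  constructor
  · intro h t
    have hpfun : p = fun s => gV L (q s) (deriv q s) := by
      funext s
      obtain ⟨_, hv1, hp1, _⟩ := h s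
      rw [hp1, hv1]
    obtain ⟨hmem, hv1, hp1, hforce⟩ := h t
    have hpt : p t = gV L (q t) (deriv q t) := by rw [hp1, hv1]
    have hset : CVs (q t) (p t) = CV (q t) (deriv q t) := by
      rw [hpt, hcompat]
    refine ⟨hv1, hpt, hset ▸ hmem, ?_⟩
    intro w hw
    have := hforce w (hset ▸ hw)
    rwa [hpfun, hv1] at this
  · intro h t
    have hpfun : p = fun s => gV L (q s) (deriv q s) := by
      funext s
      exact (h s).2.1
    obtain ⟨hv1, hp1, hmem, hforce⟩ := h t
    have hset : CVs (q t) (p t) = CV (q t) (deriv q t) := by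
      rw [hp1, hcompat]
    refine ⟨hset ▸ hmem, hv1, by rw [hp1, hv1], ?_⟩
    intro w hw
    have := hforce w (hset ▸ hw)
    rwa [hpfun, hv1]

end
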